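/- Let A = J_m ⊕ J_n with m > n ≥ 1 and let B ∈ NilC(A) have canonical rank r ≥ 1 with parameters (a_i), (b_i), (c_i), (d_i) satisfying the canonical-rank conditions and c_{n−r} ≠ 0. Define X as the matrix commuting with A with Turnbull–Aitken row-1 parameters x₀ = 1, x_i = 0 for i ≥ 1, top-right parameters (y₀,…,y_{n−1}) = (a_{m−r}, …, a_{m−1}, 0, …, 0), bottom-left parameters all zero, and bottom-right parameters (w₀,…,w_{n−1}) = (c_{n−r}, …, c_{n−1}, 0, …, 0). Then X is invertible and X⁻¹BX has Turnbull–Aitken parameters a'_i = a_i for 1 ≤ i ≤ m−r−1, a'_i = 0 for m−r ≤ i ≤ m−1, c'_{n−r} = 1, and c'_i = 0 for n−r < i ≤ n−1. -/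

import Mathlib

/-- The k×k nilpotent Jordan block with eigenvalue 0. -/
def jordanBlock (F : Type*) [Field F] (k : ℕ) : Matrix (Fin k) (Fin k) F :=
  fun i j => if (i : ℕ) + 1 = (j : ℕ) then 1 else 0

/-- The direct sum J_m ⊕ J_n, indexed by `Fin m ⊕ Fin n`. -/
def jordanSum (F : Type*) [Field F] (m n : ℕ) :
    Matrix (Fin m ⊕ Fin n) (Fin m ⊕ Fin n) F :=
  Matrix.fromBlocks (jordanBlock F m) 0 0 (jordanBlock F n)

/-- The Turnbull–Aitken block matrix determined by the row-1 parameters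
`a` (top-left m×m upper-triangular Toeplitz block), `b` (top-right m×n TA block),
and the row-(m+1) parameters `c` (bottom-left n×m TA block, whose entries depend
on the arm length j−i−(m−n)) and `d` (bottom-right n×n upper-triangular
Toeplitz block).  This is the general form of a matrix commuting with
J_m ⊕ J_n when m ≥ n. -/
def TAmat {F : Type*} [Field F] (m n : ℕ) (a b c d : ℕ → F) :
    Matrix (Fin m ⊕ Fin n) (Fin m ⊕ Fin n) F :=
  fun p q => match p, q with
  | .inl i, .inl j => if (i : ℕ) ≤ (j : ℕ) then a ((j : ℕ) - (i : ℕ)) else 0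
  | .inl i, .inr j => if (i : ℕ) ≤ (j : ℕ) then b ((j : ℕ) - (i : ℕ)) else 0
  | .inr i, .inl j => if (i : ℕ) + (m - n) ≤ (j : ℕ) then
      c ((j : ℕ) - (i : ℕ) - (m - n)) else 0
  | .inr i, .inr j => if (i : ℕ) ≤ (j : ℕ) then d ((j : ℕ) - (i : ℕ)) else 0

/-!
Encode the Turnbull–Aitken parameters `(a, b, c, d)` of a matrix commuting with `J_m ⊕ J_n` as
power series `(A, B, C, D)`. Every block is then an upper triangular Toeplitz matrix, the
bottom-left one shifted by `m - n`, and multiplication becomes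
`(A, B, C, D) (A', B', C', D') = (AA' + X^(m-n) BC', AB' + BD', CA' + DC', DD' + X^(m-n) CB')`.
For `W(0) = c_{n-r} ≠ 0` the matrix `(1, Y, 0, W)` has inverse `(1, -YW⁻¹, 0, W⁻¹)`, and conjugating
by it gives `a' = A - X^(m-n) Y W⁻¹ C` and `c' = W⁻¹ C`. As `c_i = 0` for `i < n - r`, `W` is the
window of `C` starting at degree `n - r`, so `C ≡ X^(n-r) W mod X^n`. Hence `c' ≡ X^(n-r) mod X^n`
and `a' ≡ A - X^(m-r) Y mod X^m`, from which the coefficients are read off.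
-/

open PowerSeries

namespace PowerSeries

open Finset

section Semiring

variable {R : Type*} [Semiring R]

noncomputable def upperToeplitz {p q : ℕ} (P : R⟦X⟧) : Matrix (Fin p) (Fin q) R :=
  fun i j => if (i : ℕ) ≤ j then coeff (j - i) P else 0

theorem coeff_X_pow_mul_mk_window (c : ℕ → R) {l r i : ℕ} (hi : i < l + r) :
    coeff i (X ^ l * mk fun k => if k < r then c (l + k) else 0) =
      if l ≤ i then c i else 0 := by
  rw [coeff_X_pow_mul', coeff_mk]
  split_ifs
  · congr 1; omega
  · omega
  · rfl

theorem sum_range_ite_coeff_mul_ite_coeff (P Q : R⟦X⟧) (i j : ℕ) :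
    ∑ k ∈ range (j + 1),
        (if i ≤ k then coeff (k - i) P else 0) * (if k ≤ j then coeff (j - k) Q else 0) =
      if i ≤ j then coeff (j - i) (P * Q) else 0 := by
  split_ifs with hij
  · rw [range_eq_Ico, ← sum_Ico_consecutive _ (Nat.zero_le i) (by omega : i ≤ j + 1),
      sum_eq_zero fun k hk => by simp [Nat.not_le.mpr (mem_Ico.mp hk).2],
      zero_add, sum_Ico_eq_sum_range, coeff_mul, Nat.sum_antidiagonal_eq_sum_range_succ_mk,
      show j + 1 - i = j - i + 1 by omega]
    refine sum_congr rfl fun t ht => ?_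
    rw [mem_range] at ht
    rw [if_pos (by omega), if_pos (by omega), Nat.add_sub_cancel_left, Nat.sub_sub]
  · exact sum_eq_zero fun k _ => by split_ifs <;> first | simp | omega

/-- The hypothesis makes the middle indices `N ≤ k ≤ j` missing from the product contribute
nothing; it is vacuous when `q ≤ N`. -/
theorem upperToeplitz_mul {p N q : ℕ} (P Q : R⟦X⟧) (hQ : X ^ (q - N) ∣ Q) :
    (upperToeplitz P : Matrix (Fin p) (Fin N) R) * (upperToeplitz Q : Matrix (Fin N) (Fin q) R) =
      upperToeplitz (P * Q) := by
  ext i j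
  set f : ℕ → R := fun k =>
    (if (i : ℕ) ≤ k then coeff (k - i) P else 0) * (if k ≤ j then coeff (j - k) Q else 0)
  have hf : ∀ k, f k ≠ 0 → k < N ∧ k < j + 1 := by
    intro k hk
    by_contra! h
    refine hk ?_
    by_cases hkj : k ≤ j
    · simp only [f, if_pos hkj, X_pow_dvd_iff.mp hQ (j - k) (by omega), mul_zero]
    · simp [f, hkj]
  have hvanish : ∀ s : Finset ℕ, ∀ k ∈ s, k ∉ range N ∩ range (j + 1) → f k = 0 :=
    fun s k _ hk => by_contra fun h => hk (by simpa using hf k h)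
  calc ∑ k : Fin N, upperToeplitz P i k * upperToeplitz Q k j
      = ∑ k ∈ range N, f k := Fin.sum_univ_eq_sum_range f N
    _ = ∑ k ∈ range (j + 1), f k :=
      (sum_subset inter_subset_left (hvanish _)).symm.trans
        (sum_subset inter_subset_right (hvanish _))
    _ = upperToeplitz (P * Q) i j := sum_range_ite_coeff_mul_ite_coeff P Q i j

theorem upperToeplitz_one {p : ℕ} :
    (upperToeplitz 1 : Matrix (Fin p) (Fin p) R) = 1 := by
  ext i j
  simp only [upperToeplitz, coeff_one, Matrix.one_apply, Fin.ext_iff]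
  split_ifs <;> first | rfl | omega

theorem upperToeplitz_zero {p q : ℕ} :
    (upperToeplitz 0 : Matrix (Fin p) (Fin q) R) = 0 := by
  ext i j
  simp [upperToeplitz]

theorem upperToeplitz_add {p q : ℕ} (P Q : R⟦X⟧) :
    (upperToeplitz (P + Q) : Matrix (Fin p) (Fin q) R) = upperToeplitz P + upperToeplitz Q := by
  ext i j
  simp only [upperToeplitz, map_add, Matrix.add_apply]
  split_ifs <;> simp

end Semiring

section Ring

variable {R : Type*} [Ring R]

theorem coeff_eq_coeff_of_X_pow_dvd_sub {f g : R⟦X⟧} {k i : ℕ}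
    (h : X ^ k ∣ f - g) (hi : i < k) : coeff i f = coeff i g := by
  rw [← sub_eq_zero, ← map_sub]
  exact X_pow_dvd_iff.mp h i hi

theorem X_pow_dvd_mk_sub_X_pow_mul_mk_window (c : ℕ → R) {l r : ℕ}
    (hc : ∀ i < l, c i = 0) :
    X ^ (l + r) ∣ mk c - X ^ l * mk fun k => if k < r then c (l + k) else 0 :=
  X_pow_dvd_iff.mpr fun i hi => by
    rw [map_sub, coeff_mk, coeff_X_pow_mul_mk_window c hi]
    split_ifs
    · exact sub_self _
    · rw [hc i (by omega), sub_zero]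

end Ring

section CommRing

variable {R : Type*} [CommRing R]

theorem coeff_sub_X_pow_mul_mul_of_X_pow_dvd {A Y P : R⟦X⟧} {s k l i : ℕ}
    (h : X ^ k ∣ P - X ^ l) (hi : i < s + k) :
    coeff i (A - X ^ s * (Y * P)) = coeff i (A - X ^ (s + l) * Y) := by
  refine coeff_eq_coeff_of_X_pow_dvd_sub ?_ hi
  rw [sub_sub_sub_cancel_left, dvd_sub_comm,
    show X ^ s * (Y * P) - X ^ (s + l) * Y = X ^ s * (Y * (P - X ^ l)) by ring, pow_add]
  exact mul_dvd_mul_left _ (h.mul_left Y)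

end CommRing

theorem X_pow_dvd_inv_mul_mk_sub_X_pow {K : Type*} [Field K] {c : ℕ → K} {l r : ℕ}
    (hW : constantCoeff (mk fun k => if k < r then c (l + k) else 0) ≠ 0)
    (hc : ∀ i < l, c i = 0) :
    X ^ (l + r) ∣ (mk fun k => if k < r then c (l + k) else 0)⁻¹ * mk c - X ^ l := by
  have h := (X_pow_dvd_mk_sub_X_pow_mul_mk_window c (r := r) hc).mul_left
    (mk fun k => if k < r then c (l + k) else 0)⁻¹
  rwa [mul_sub, mul_left_comm, PowerSeries.inv_mul_cancel _ hW, mul_one] at h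

end PowerSeries

section TAmat

variable {F : Type*} [Field F] (m n : ℕ)

noncomputable def taMatrix (A B C D : F⟦X⟧) : Matrix (Fin m ⊕ Fin n) (Fin m ⊕ Fin n) F :=
  TAmat m n (coeff · A) (coeff · B) (coeff · C) (coeff · D)

theorem TAmat_eq_taMatrix (a b c d : ℕ → F) :
    TAmat m n a b c d = taMatrix m n (mk a) (mk b) (mk c) (mk d) := by
  simp only [taMatrix, coeff_mk]

theorem TAmat_one_zero_eq_taMatrix (y w : ℕ → F) :
    TAmat m n (fun k => if k = 0 then 1 else 0) y (fun _ => 0) w =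
      taMatrix m n 1 (mk y) 0 (mk w) := by
  rw [TAmat_eq_taMatrix, show mk (fun k => if k = 0 then (1 : F) else 0) = 1 from
    ext fun k => by rw [coeff_mk, coeff_one]]
  rfl

theorem taMatrix_eq_fromBlocks (A B C D : F⟦X⟧) :
    taMatrix m n A B C D = Matrix.fromBlocks (upperToeplitz A) (upperToeplitz B)
      (upperToeplitz (X ^ (m - n) * C)) (upperToeplitz D) := by
  ext (i | i) (j | j) <;> simp only [taMatrix, TAmat, Matrix.fromBlocks_apply₁₁,
    Matrix.fromBlocks_apply₁₂, Matrix.fromBlocks_apply₂₁, Matrix.fromBlocks_apply₂₂, upperToeplitz]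
  rw [coeff_X_pow_mul']
  split_ifs <;> first | rfl | omega

theorem taMatrix_one_zero_zero_one : taMatrix m n (1 : F⟦X⟧) 0 0 1 = 1 := by
  rw [taMatrix_eq_fromBlocks, mul_zero, upperToeplitz_one, upperToeplitz_one, upperToeplitz_zero,
    upperToeplitz_zero, Matrix.fromBlocks_one]

variable {m n}

theorem taMatrix_mul (hnm : n ≤ m) (A B C D A' B' C' D' : F⟦X⟧) :
    taMatrix m n A B C D * taMatrix m n A' B' C' D' =
      taMatrix m n (A * A' + X ^ (m - n) * (B * C')) (A * B' + B * D')
        (C * A' + D * C') (D * D' + X ^ (m - n) * (C * B')) := by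
  simp only [taMatrix_eq_fromBlocks, Matrix.fromBlocks_multiply]
  simp only [upperToeplitz_mul, dvd_mul_right, tsub_self, pow_zero, one_dvd,
    Nat.sub_eq_zero_of_le hnm, ← upperToeplitz_add]
  congr 2 <;> ring

theorem taMatrix_one_zero_mul (hnm : n ≤ m) (Y W Y' W' : F⟦X⟧) :
    taMatrix m n 1 Y 0 W * taMatrix m n 1 Y' 0 W' = taMatrix m n 1 (Y' + Y * W') 0 (W * W') := by
  rw [taMatrix_mul hnm]
  congr 1 <;> ring

theorem taMatrix_one_zero_mul_inv (hnm : n ≤ m) (Y : F⟦X⟧) {W : F⟦X⟧}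
    (hW : constantCoeff W ≠ 0) :
    taMatrix m n 1 Y 0 W * taMatrix m n 1 (-(Y * W⁻¹)) 0 W⁻¹ = 1 := by
  rw [taMatrix_one_zero_mul hnm, neg_add_cancel, PowerSeries.mul_inv_cancel W hW,
    taMatrix_one_zero_zero_one]

theorem isUnit_taMatrix_one_zero (hnm : n ≤ m) (Y : F⟦X⟧) {W : F⟦X⟧}
    (hW : constantCoeff W ≠ 0) : IsUnit (taMatrix m n 1 Y 0 W) :=
  .of_mul_eq_one _ (taMatrix_one_zero_mul_inv hnm Y hW)

theorem taMatrix_one_zero_inv_mul_mul (hnm : n ≤ m) (A B C D Y : F⟦X⟧) {W : F⟦X⟧}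
    (hW : constantCoeff W ≠ 0) :
    (taMatrix m n 1 Y 0 W)⁻¹ * taMatrix m n A B C D * taMatrix m n 1 Y 0 W =
      taMatrix m n (A - X ^ (m - n) * (Y * (W⁻¹ * C)))
        ((A - X ^ (m - n) * (Y * (W⁻¹ * C))) * Y + (B - Y * W⁻¹ * D) * W) (W⁻¹ * C)
        (W⁻¹ * D * W + X ^ (m - n) * (W⁻¹ * C * Y)) := by
  rw [Matrix.inv_eq_right_inv (taMatrix_one_zero_mul_inv hnm Y hW), taMatrix_mul hnm,
    taMatrix_mul hnm]
  congr 1 <;> ring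

end TAmat

theorem transformation_matrix_c_ne_zero_general {F : Type*} [Field F] (m n r : ℕ)
    (hmn : m > n) (hr : 1 ≤ r) (hrn : r ≤ n)
    (a b c d : ℕ → F)
    (hlead : c (n - r) ≠ 0)
    (hbc : ∀ i : ℕ, i < n - r → b i = 0 ∧ c i = 0) :
    IsUnit (TAmat (F := F) m n
        (fun k => if k = 0 then 1 else 0)
        (fun k => if k < r then a (m - r + k) else 0)
        (fun _ => 0)
        (fun k => if k < r then c (n - r + k) else 0)) ∧
    ∃ a' b' c' d' : ℕ → F,
      (TAmat (F := F) m n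
        (fun k => if k = 0 then 1 else 0)
        (fun k => if k < r then a (m - r + k) else 0)
        (fun _ => 0)
        (fun k => if k < r then c (n - r + k) else 0))⁻¹
        * TAmat m n a b c d *
        TAmat m n
        (fun k => if k = 0 then 1 else 0)
        (fun k => if k < r then a (m - r + k) else 0)
        (fun _ => 0)
        (fun k => if k < r then c (n - r + k) else 0)
        = TAmat m n a' b' c' d' ∧
      (∀ i : ℕ, 1 ≤ i → i ≤ m - r - 1 → a' i = a i) ∧
      (∀ i : ℕ, m - r ≤ i → i ≤ m - 1 → a' i = 0) ∧
      c' (n - r) = 1 ∧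
      (∀ i : ℕ, n - r < i → i ≤ n - 1 → c' i = 0) := by
  rw [TAmat_one_zero_eq_taMatrix, TAmat_eq_taMatrix m n a b c d]
  set Y : F⟦X⟧ := mk fun k => if k < r then a (m - r + k) else 0
  set W : F⟦X⟧ := mk fun k => if k < r then c (n - r + k) else 0
  have hW : constantCoeff W ≠ 0 := by
    rwa [constantCoeff_mk, if_pos (show 0 < r from hr), add_zero]
  have hWC : X ^ n ∣ W⁻¹ * mk c - X ^ (n - r) := by
    simpa only [Nat.sub_add_cancel hrn] using
      X_pow_dvd_inv_mul_mk_sub_X_pow hW fun i hi => (hbc i hi).2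
  have ha' : ∀ i < m, coeff i (mk a - X ^ (m - n) * (Y * (W⁻¹ * mk c))) =
      if i < m - r then a i else 0 := fun i hi => by
    rw [coeff_sub_X_pow_mul_mul_of_X_pow_dvd hWC (by omega), show m - n + (n - r) = m - r by omega,
      map_sub, coeff_mk, coeff_X_pow_mul_mk_window a (by omega)]
    split_ifs <;> first | omega | simp
  have hc' : ∀ i < n, coeff i (W⁻¹ * mk c) = if i = n - r then 1 else 0 := fun i hi => by
    rw [coeff_eq_coeff_of_X_pow_dvd_sub hWC hi, coeff_X_pow]
  rw [taMatrix_one_zero_inv_mul_mul hmn.le _ _ _ _ _ hW]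
  refine ⟨isUnit_taMatrix_one_zero hmn.le Y hW, _, _, _, _, rfl,
    fun i _ hi => by rw [ha' i (by omega), if_pos (by omega)],
    fun i hi hi' => by rw [ha' i (by omega), if_neg (by omega)],
    by rw [hc' _ (by omega), if_pos rfl],
    fun i hi hi' => by rw [hc' i (by omega), if_neg (by omega)]⟩

/-- the explicit transformation matrix.  For m > n ≥ 1, let
B ∈ NilC(J_m ⊕ J_n) have canonical rank r with c_{n−r} ≠ 0.  The matrix X
commuting with A whose Turnbull–Aitken parameters are x₀ = 1, xᵢ = 0 (i ≥ 1),
(y₀,…,y_{n−1}) = (a_{m−r},…,a_{m−1},0,…,0), z = 0 and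
(w₀,…,w_{n−1}) = (c_{n−r},…,c_{n−1},0,…,0) is invertible, and X⁻¹BX has
Turnbull–Aitken parameters with a'ᵢ = aᵢ for 1 ≤ i ≤ m−r−1, a'ᵢ = 0 for
m−r ≤ i ≤ m−1, c'_{n−r} = 1 and c'ᵢ = 0 for n−r < i ≤ n−1. -/
theorem transformation_matrix_c_ne_zero {F : Type*} [Field F] (m n r : ℕ)
    (hmn : m > n) (hn : n ≥ 1) (hr : 1 ≤ r) (hrn : r ≤ n)
    (a b c d : ℕ → F) (ha0 : a 0 = 0) (hd0 : d 0 = 0)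
    (hlead : c (n - r) ≠ 0)
    (hbc : ∀ i : ℕ, i < n - r → b i = 0 ∧ c i = 0)
    (hda : ∀ i : ℕ, 1 ≤ i → i ≤ n - r → d i = a i)
    (hBnil : (TAmat (F := F) m n a b c d) ^ (m + n) = 0) :
    IsUnit (TAmat (F := F) m n
        (fun k => if k = 0 then 1 else 0)
        (fun k => if k < r then a (m - r + k) else 0)
        (fun _ => 0)
        (fun k => if k < r then c (n - r + k) else 0)) ∧
    ∃ a' b' c' d' : ℕ → F,
      (TAmat (F := F) m n
        (fun k => if k = 0 then 1 else 0)
        (fun k => if k < r then a (m - r + k) else 0)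
        (fun _ => 0)
        (fun k => if k < r then c (n - r + k) else 0))⁻¹
        * TAmat m n a b c d *
        TAmat m n
        (fun k => if k = 0 then 1 else 0)
        (fun k => if k < r then a (m - r + k) else 0)
        (fun _ => 0)
        (fun k => if k < r then c (n - r + k) else 0)
        = TAmat m n a' b' c' d' ∧
      (∀ i : ℕ, 1 ≤ i → i ≤ m - r - 1 → a' i = a i) ∧
      (∀ i : ℕ, m - r ≤ i → i ≤ m - 1 → a' i = 0) ∧
      c' (n - r) = 1 ∧
      (∀ i : ℕ, n - r < i → i ≤ n - 1 → c' i = 0) :=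
  transformation_matrix_c_ne_zero_general m n r hmn hr hrn a b c d hlead hbc
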